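/- If a point P = (x0:x1:x2:x3) lies on the plane x0 = 0 and on the surface D = 0 but not on the twisted cubic T, then P is a smooth point of the quartic D = 0, and hence min over i of the multiplicity at P of x_i*D^3 is at most 3 (achieved by some coordinate x_i not vanishing at P). -/

import Mathlib

open MvPolynomial in
/-- The discriminant quartic as a polynomial in four variables. -/
noncomputable def Dpoly (k : Type*) [Field k] : MvPolynomial (Fin 4) k :=
  X 0 ^ 2 * X 3 ^ 2 - 3 * X 1 ^ 2 * X 2 ^ 2 - 6 * X 0 * X 1 * X 2 * X 3 +
    4 * X 0 * X 2 ^ 3 + 4 * X 3 * X 1 ^ 3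

/-!
On the plane `x₀ = 0` one has `∂₃D = 4x₁³`, and `∂₀D = 4x₂³` once also `x₁ = 0`; a point with
`x₀ = x₁ = x₂ = 0` is `(0, 0, 0, t³)`, on `T`. So at `P` some `∂ⱼD` does not vanish, with `j ≠ i`
for a coordinate `xᵢ(P) ≠ 0`. A derivation maps `m^(n+1)` into `m^n`, so if `Xᵢ D³` were in
`m_P⁴` then `∂ⱼ³(Xᵢ D³)` would vanish at `P`; but since `D(P) = 0` its value there is
`6 xᵢ(P) (∂ⱼD(P))³ ≠ 0`.
-/

namespace Derivation

variable {R A : Type*} [CommRing R] [CommRing A] [Algebra R A]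

@[simp]
theorem map_ofNat (D : Derivation R A A) (n : ℕ) [n.AtLeastTwo] : D (ofNat(n) : A) = 0 :=
  D.map_natCast n

theorem map_mem_pow_of_mem_pow_succ (D : Derivation R A A) (I : Ideal A) {n : ℕ} {a : A}
    (ha : a ∈ I ^ (n + 1)) : D a ∈ I ^ n := by
  induction n generalizing a with
  | zero => simp [Ideal.one_eq_top]
  | succ n ih =>
    rw [pow_succ] at ha
    refine Submodule.mul_induction_on ha (fun b hb c hc => ?_) (fun b c hb hc => ?_)
    · rw [leibniz, smul_eq_mul, smul_eq_mul, pow_succ]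
      exact add_mem (Ideal.mul_mem_right _ _ hb) (Ideal.mul_mem_mul_rev (ih hb) hc)
    · rw [map_add]
      exact add_mem hb hc

theorem iterate_map_mem_pow_of_mem_pow_add (D : Derivation R A A) (I : Ideal A) {n k : ℕ} {a : A}
    (ha : a ∈ I ^ (n + k)) : (⇑D)^[k] a ∈ I ^ n := by
  induction k generalizing a with
  | zero => exact ha
  | succ k ih =>
    rw [Function.iterate_succ_apply]
    exact ih (D.map_mem_pow_of_mem_pow_succ I (by rwa [← add_assoc] at ha))

theorem map_iterate_three_pow_three {B : Type*} [CommRing B] (D : Derivation R A A) (φ : A →+* B)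
    {a : A} (ha : φ a = 0) : φ (D (D (D (a ^ 3)))) = 6 * φ (D a) ^ 3 := by
  simp only [pow_succ, pow_zero, one_mul, leibniz, smul_eq_mul, map_add, map_mul, ha]
  ring

end Derivation

namespace MvPolynomial

variable {R σ : Type*} [CommRing R]

theorem eval_eq_zero_of_mem_span_X_sub_C {x : σ → R} {f : MvPolynomial σ R}
    (hf : f ∈ Ideal.span (Set.range fun j => X j - C (x j))) : eval x f = 0 :=
  (Ideal.span_le.2 (Set.range_subset_iff.2 fun j => by simp) : _ ≤ RingHom.ker (eval x)) hf

theorem X_mul_pow_three_notMem_span_X_sub_C_pow_four [IsDomain R] [CharZero R] {x : σ → R}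
    {p : MvPolynomial σ R} {i j : σ} (hji : j ≠ i) (hxi : x i ≠ 0) (hp : eval x p = 0)
    (hpj : eval x (pderiv j p) ≠ 0) :
    X i * p ^ 3 ∉ Ideal.span (Set.range fun j => X j - C (x j)) ^ 4 := by
  intro hmem
  have hderiv :
      (⇑(pderiv j))^[3] (X i * p ^ 3) ∈ Ideal.span (Set.range fun j => X j - C (x j)) := by
    simpa using (pderiv j).iterate_map_mem_pow_of_mem_pow_add _ (n := 1) (k := 3) hmem
  have hval : eval x ((⇑(pderiv j))^[3] (X i * p ^ 3)) = x i * (6 * eval x (pderiv j p) ^ 3) := by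
    have hX : ∀ q : MvPolynomial σ R, pderiv j (X i * q) = X i * pderiv j q := fun q => by
      rw [pderiv_mul, pderiv_X_of_ne hji.symm, zero_mul, zero_add]
    simp only [Function.iterate_succ_apply', Function.iterate_zero_apply, hX, map_mul, eval_X,
      (pderiv j).map_iterate_three_pow_three (eval x) hp]
  rw [eval_eq_zero_of_mem_span_X_sub_C hderiv] at hval
  exact mul_ne_zero hxi (mul_ne_zero (by norm_num) (pow_ne_zero 3 hpj)) hval.symm

end MvPolynomial

section Dpoly

variable {k : Type*} [Field k] {x : Fin 4 → k}

open MvPolynomial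

theorem eval_pderiv_three_Dpoly_of_eq_zero (h0 : x 0 = 0) :
    eval x (pderiv 3 (Dpoly k)) = 4 * x 1 ^ 3 := by
  simp [Dpoly, h0, mul_comm]

theorem eval_pderiv_zero_Dpoly_of_eq_zero (h0 : x 0 = 0) (h1 : x 1 = 0) :
    eval x (pderiv 0 (Dpoly k)) = 4 * x 2 ^ 3 := by
  simp [Dpoly, h0, h1, mul_comm]

theorem coord_one_ne_zero_or_coord_two_ne_zero [IsAlgClosed k] (h0 : x 0 = 0)
    (hT : ¬ ∃ t0 t1 : k, x = ![t0 ^ 3, t0 ^ 2 * t1, t0 * t1 ^ 2, t1 ^ 3]) :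
    x 1 ≠ 0 ∨ x 2 ≠ 0 := by
  by_contra! h
  obtain ⟨t, ht⟩ := IsAlgClosed.exists_pow_nat_eq (x 3) (n := 3) (by norm_num)
  exact hT ⟨0, t, by ext i; fin_cases i <;> simp [h0, h.1, h.2, ht]⟩

theorem exists_coord_ne_zero_and_eval_pderiv_Dpoly_ne_zero [CharZero k] (h0 : x 0 = 0)
    (h12 : x 1 ≠ 0 ∨ x 2 ≠ 0) :
    ∃ i j : Fin 4, j ≠ i ∧ x i ≠ 0 ∧ eval x (pderiv j (Dpoly k)) ≠ 0 := by
  by_cases h1 : x 1 = 0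
  · have h2 : x 2 ≠ 0 := h12.resolve_left (not_not.2 h1)
    refine ⟨2, 0, by decide, h2, ?_⟩
    rw [eval_pderiv_zero_Dpoly_of_eq_zero h0 h1]
    exact mul_ne_zero (by norm_num) (pow_ne_zero 3 h2)
  · refine ⟨1, 3, by decide, h1, ?_⟩
    rw [eval_pderiv_three_Dpoly_of_eq_zero h0]
    exact mul_ne_zero (by norm_num) (pow_ne_zero 3 h1)

end Dpoly

open MvPolynomial in
theorem smooth_points_off_twisted_cubic_general {k : Type*} [Field k] [IsAlgClosed k]
    [CharZero k] (x : Fin 4 → k) (h0 : x 0 = 0)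
    (hD : eval x (Dpoly k) = 0)
    (hT : ¬ ∃ t0 t1 : k, x = ![t0 ^ 3, t0 ^ 2 * t1, t0 * t1 ^ 2, t1 ^ 3]) :
    (∃ i : Fin 4, eval x (pderiv i (Dpoly k)) ≠ 0) ∧
    (∃ i : Fin 4,
      X i * Dpoly k ^ 3 ∉
        (Ideal.span (Set.range fun j : Fin 4 => X j - C (x j)) : Ideal (MvPolynomial (Fin 4) k)) ^ 4) := by
  have h12 : x 1 ≠ 0 ∨ x 2 ≠ 0 := coord_one_ne_zero_or_coord_two_ne_zero h0 hT
  obtain ⟨i, j, hji, hxi, hj⟩ := exists_coord_ne_zero_and_eval_pderiv_Dpoly_ne_zero h0 h12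
  exact ⟨⟨j, hj⟩, i, X_mul_pow_three_notMem_span_X_sub_C_pow_four hji hxi hD hj⟩

open MvPolynomial in
/-- If a point `P` lies on the plane `x0 = 0` and on the surface `D = 0` but not on the
twisted cubic, then `P` is a smooth point of the quartic `D = 0`, and hence the minimum
over `i` of the multiplicity at `P` of `x_i * D^3` is at most `3` (i.e. some
`X i * D^3` is not in the fourth power of the maximal ideal at `P`). -/
theorem smooth_points_off_twisted_cubic {k : Type*} [Field k] [IsAlgClosed k]
    [CharZero k] (x : Fin 4 → k) (hx : x ≠ 0) (h0 : x 0 = 0)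
    (hD : eval x (Dpoly k) = 0)
    (hT : ¬ ∃ t0 t1 : k, x = ![t0 ^ 3, t0 ^ 2 * t1, t0 * t1 ^ 2, t1 ^ 3]) :
    (∃ i : Fin 4, eval x (pderiv i (Dpoly k)) ≠ 0) ∧
    (∃ i : Fin 4,
      X i * Dpoly k ^ 3 ∉
        (Ideal.span (Set.range fun j : Fin 4 => X j - C (x j)) : Ideal (MvPolynomial (Fin 4) k)) ^ 4) :=
  smooth_points_off_twisted_cubic_general x h0 hD hT
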